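/- arXiv:math/0008161 — 2 statements merged into one kernel-verified Lean document; each statement's English description precedes it below -/
import Mathlib

section
/- Let S ⊆ ℤ × ℤ be the set consisting of the pairs (2n, 0) for integers n ≥ 1, the pairs (8k + 2n − 1, 16k − 8) for integers k ≥ 1 and n ≥ 1, and the pairs (8k + 2n + 6, 16k) for integers k ≥ 1 and n ≥ 0. Let a and b be positive integers with b ≡ 8a (mod 16) and 100b > 876a. Then: (i) every pair of integers (χ, c) with c ≥ 0, c ≡ 8χ (mod 16), and 2ac ≤ 2bχ − b² − 12b + 2ab can be written as χ = m·a + χ₀ and c = m·b + c₀ for some integer m ≥ 0 and some (χ₀, c₀) ∈ S; and (ii) the set of pairs of integers (χ, c) with 0 ≤ c, 100c ≤ 876χ, and 2ac > 2bχ − b² − 12b + 2ab is finite. -/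
/-- Full lattice-point content of Theorem 1.1/2.6. -/
theorem stmt_11 (S : Set (ℤ × ℤ))
    (hS : S = {p : ℤ × ℤ | (∃ n : ℤ, 1 ≤ n ∧ p = (2 * n, 0)) ∨
      (∃ k n : ℤ, 1 ≤ k ∧ 1 ≤ n ∧ p = (8 * k + 2 * n - 1, 16 * k - 8)) ∨
      (∃ k n : ℤ, 1 ≤ k ∧ 0 ≤ n ∧ p = (8 * k + 2 * n + 6, 16 * k))})
    (a b : ℤ) (ha : 0 < a) (hb : 0 < b)
    (hmod : b ≡ 8 * a [ZMOD 16]) (hslope : 876 * a < 100 * b) :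
    (∀ χ c : ℤ, 0 ≤ c → c ≡ 8 * χ [ZMOD 16] →
      2 * a * c ≤ 2 * b * χ - b ^ 2 - 12 * b + 2 * a * b →
      ∃ m : ℤ, 0 ≤ m ∧ ∃ χ₀ c₀ : ℤ, (χ₀, c₀) ∈ S ∧ χ = m * a + χ₀ ∧ c = m * b + c₀) ∧
    {p : ℤ × ℤ | 0 ≤ p.2 ∧ 100 * p.2 ≤ 876 * p.1 ∧
      2 * a * p.2 > 2 * b * p.1 - b ^ 2 - 12 * b + 2 * a * b}.Finite := by
  have hab : 2 * a + 1 ≤ b := by nlinarith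
  constructor
  · intro χ c hc hmodc hineq
    set m : ℤ := c / b with hm
    set c₀ : ℤ := c % b with hc₀def
    set χ₀ : ℤ := χ - m * a with hχ₀def
    have hm0 : 0 ≤ m := Int.ediv_nonneg hc hb.le
    have hc₀0 : 0 ≤ c₀ := Int.emod_nonneg c hb.ne'
    have hc₀b : c₀ < b := Int.emod_lt_of_pos c hb
    have hceq : c = m * b + c₀ := by
      have := Int.mul_ediv_add_emod c b
      rw [hm, hc₀def]; linarith
    have hχeq : χ = m * a + χ₀ := by rw [hχ₀def]; ring
    have hineq' : 2 * a * c₀ ≤ 2 * b * χ₀ - b ^ 2 - 12 * b + 2 * a * b := by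
      have h := hineq
      rw [hceq, hχeq] at h
      nlinarith [h]
    have h12 : c₀ + 12 ≤ 2 * χ₀ := by
      nlinarith [hineq', mul_pos (show (0:ℤ) < b - c₀ by linarith)
        (show (0:ℤ) < b - 2 * a by linarith)]
    have hd : (16:ℤ) ∣ c₀ - 8 * χ₀ := by
      have h1 : (16:ℤ) ∣ 8 * χ - c := hmodc.dvd
      have h2 : (16:ℤ) ∣ 8 * a - b := hmod.dvd
      have h3 : (16:ℤ) ∣ (8 * χ - c) - m * (8 * a - b) := dvd_sub h1 (h2.mul_left m)
      have he : c₀ - 8 * χ₀ = -((8 * χ - c) - m * (8 * a - b)) := by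
        rw [hχ₀def]
        have hcc : c₀ = c - m * b := by linarith [hceq]
        rw [hcc]; ring
      rw [he]
      exact dvd_neg.mpr h3
    refine ⟨m, hm0, χ₀, c₀, ?_, hχeq, hceq⟩
    rw [hS]
    simp only [Set.mem_setOf_eq]
    obtain ⟨t, ht⟩ | ⟨t, ht⟩ := Int.even_or_odd χ₀
    · by_cases hz : c₀ = 0
      · left
        refine ⟨t, by omega, ?_⟩
        rw [Prod.mk.injEq]
        omega
      · right; right
        obtain ⟨k, hk⟩ : (16:ℤ) ∣ c₀ := by omega
        refine ⟨k, t - 4 * k - 3, by omega, by omega, ?_⟩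
        rw [Prod.mk.injEq]
        omega
    · right; left
      obtain ⟨k, hk⟩ : (16:ℤ) ∣ c₀ + 8 := by omega
      refine ⟨k, t - 4 * k + 1, by omega, by omega, ?_⟩
      rw [Prod.mk.injEq]
      omega
  · set B : ℤ := 100 * (b ^ 2 + 12 * b) with hB
    have hB0 : 0 < B := by nlinarith
    apply Set.Finite.subset (Set.finite_Icc ((0, 0) : ℤ × ℤ) ((B, 9 * B) : ℤ × ℤ))
    rintro ⟨x, y⟩ ⟨h1, h2, h3⟩
    simp only [Set.mem_setOf_eq] at h1 h2 h3
    have hx0 : 0 ≤ x := by linarith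
    have hxB : x ≤ B := by
      nlinarith [mul_le_mul_of_nonneg_left h2 ha.le,
        mul_nonneg (show (0:ℤ) ≤ 200 * b - 1752 * a - 1 by linarith) hx0,
        mul_pos ha hb]
    have hyB : y ≤ 9 * B := by nlinarith
    simp only [Set.mem_Icc, Prod.le_def]
    exact ⟨⟨hx0, h1⟩, hxB, hyB⟩
end

section
/- Let S ⊆ ℤ × ℤ be the set consisting of the pairs (2n, 0) for integers n ≥ 1, the pairs (8k + 2n − 1, 16k − 8) for integers k ≥ 1 and n ≥ 1, and the pairs (8k + 2n + 6, 16k) for integers k ≥ 1 and n ≥ 0. Let a and b be positive integers with b ≡ 8a (mod 16) and 100b > 876a. Then there exists an integer N such that for every integer n ≥ N there exist an integer m ≥ 0 and a pair (χ₀, c₀) ∈ S with n + 1 = m·a + χ₀ and 8n + 8 = m·b + c₀. -/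
/-- Lattice-point content of Corollary 1.2: all signature-zero allowed lattice
points (n+1, 8n+8) with n large are of the form m·(a, b) plus a point of S. -/
theorem stmt_12 (S : Set (ℤ × ℤ))
    (hS : S = {p : ℤ × ℤ | (∃ n : ℤ, 1 ≤ n ∧ p = (2 * n, 0)) ∨
      (∃ k n : ℤ, 1 ≤ k ∧ 1 ≤ n ∧ p = (8 * k + 2 * n - 1, 16 * k - 8)) ∨
      (∃ k n : ℤ, 1 ≤ k ∧ 0 ≤ n ∧ p = (8 * k + 2 * n + 6, 16 * k))})
    (a b : ℤ) (ha : 0 < a) (hb : 0 < b)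
    (hmod : b ≡ 8 * a [ZMOD 16]) (hslope : 876 * a < 100 * b) :
    ∃ N : ℤ, ∀ n : ℤ, N ≤ n →
      ∃ m : ℤ, 0 ≤ m ∧ ∃ χ₀ c₀ : ℤ, (χ₀, c₀) ∈ S ∧
        n + 1 = m * a + χ₀ ∧ 8 * n + 8 = m * b + c₀ := by
  obtain ⟨s, hs⟩ : (16:ℤ) ∣ b - 8 * a := (Int.ModEq.dvd hmod.symm)
  -- b = 8a + 16s
  have hb8a : 8 * a < b := by linarith
  have hs1 : 1 ≤ s := by nlinarith
  set d : ℤ := b - 2 * a with hd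
  have hdpos : 0 < d := by nlinarith
  have hdb : 6 * b < 8 * d := by nlinarith
  refine ⟨17 * b + d * b, fun n hn => ?_⟩
  have hNpos : 0 < 17 * b + d * b := by positivity
  have hnpos : 0 < n := lt_of_lt_of_le hNpos hn
  set m : ℤ := (6 * n + 17 + d) / d with hm
  have hdvd := Int.mul_ediv_add_emod (6 * n + 17 + d) d
  have hr0 : 0 ≤ (6 * n + 17 + d) % d := Int.emod_nonneg _ (ne_of_gt hdpos)
  have hr1 : (6 * n + 17 + d) % d < d := Int.emod_lt_of_pos _ hdpos
  have hlow : 6 * n + 18 ≤ m * d := by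
    have : d * m = 6 * n + 17 + d - (6 * n + 17 + d) % d := by linarith
    nlinarith
  have hup : m * d ≤ 6 * n + 17 + d := by nlinarith
  have hm0 : 0 ≤ m := by nlinarith
  -- c₀ ≥ 1 : m*b ≤ 8n+7
  have hmb : m * b ≤ 8 * n + 7 := by
    have h1 : m * d * b ≤ (6 * n + 17 + d) * b := by nlinarith
    have h2 : (6 * n + 17 + d) * b ≤ (8 * n + 7) * d := by
      have h3 : (8 * d - 6 * b) * n ≥ 32 * n := by
        have : 32 ≤ 8 * d - 6 * b := by nlinarith
        nlinarith
      nlinarith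
    nlinarith
  set χ₀ : ℤ := n + 1 - m * a with hχ
  set c₀ : ℤ := 8 * n + 8 - m * b with hc
  have hc1 : 1 ≤ c₀ := by simp only [hc]; linarith
  have hceq : c₀ = 8 * χ₀ - 16 * (m * s) := by
    simp only [hc, hχ]; nlinarith
  have hkey : c₀ + 12 ≤ 2 * χ₀ := by
    have : 2 * χ₀ - c₀ = m * d - 6 * n - 6 := by simp only [hc, hχ, hd]; ring
    linarith
  refine ⟨m, hm0, χ₀, c₀, ?_, by simp only [hχ]; ring, by simp only [hc]; ring⟩
  subst hS
  rcases Int.even_or_odd χ₀ with ⟨q, hq⟩ | ⟨q, hq⟩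
  · -- χ₀ even, c₀ = 16(q - ms)
    refine Or.inr (Or.inr ⟨q - m * s, q - 4 * (q - m * s) - 3, ?_, ?_, ?_⟩)
    · omega
    · omega
    · simp only [Prod.mk.injEq]; constructor <;> omega
  · -- χ₀ odd, c₀ = 16(q - ms) + 8
    refine Or.inr (Or.inl ⟨q - m * s + 1, q + 1 - 4 * (q - m * s + 1), ?_, ?_, ?_⟩)
    · omega
    · omega
    · simp only [Prod.mk.injEq]; constructor <;> omega
end
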